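/- The eigenprojection P_d(v) = |ψ(v)⟩⟨ψ(v)| of h(v) onto the eigenvalue λ(v) converges strongly (but not in norm) to 0 as v ↗ v_{c,1}: for every fixed canonical basis vector e, ‖P_d(v)e‖² ≤ C√(v_{c,1}-v) → 0, while ‖P_d(v)‖ = 1 for all v < v_{c,1}. -/

import Mathlib

noncomputable def zeta1 (x : ℝ) : ℝ := x / 2 * (1 - Real.sqrt (1 - 4 / x ^ 2))

noncomputable def Gf (E₀ τ x v : ℝ) : ℝ := E₀ - x + τ ^ 2 * (zeta1 (x - v) + zeta1 x)

/-!
Pairing the eigenvalue equation with the lead vectors turns it into the recurrence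
`u (m + 2) + u m = t u (m + 1)` with `t = λ - v` on the biased lead and `t = λ` on the other one,
both above the band edge `2`. Its bounded solutions are geometric with ratio `zeta1 t < 1`, and the
boundary equation at the dot gives `⟪e m, ψ⟫ = τ zeta1(t)^(m+1) ⟪S, ψ⟫`, so every coefficient is
dominated by the dot amplitude `⟪S, ψ⟫`. Bessel's inequality on the biased lead bounds
`τ² ζ² ‖⟪S, ψ⟫‖² ≤ 1 - ζ²` for `ζ = zeta1 (λ - v)`, and subtracting the equations `Gf = 0` at `v`
and at `vc1` (with `zeta1` being `1/2`-Lipschitz away from the band) shows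
`τ² (1 - ζ) = O(vc1 - v)`: the eigenvalue reaches the band edge and the eigenvector leaks into the
lead. Hence `‖P_d(v) b‖² = O(vc1 - v)` for each basis vector `b`, whereas the rank-one projection
always has norm `1`.
-/

open Set
open scoped InnerProductSpace

lemma zeta1_eq_of_two_le {x : ℝ} (hx : 2 ≤ x) : zeta1 x = (x - √(x ^ 2 - 4)) / 2 := by
  have hx0 : 0 < x := by linarith
  have hsqrt : √(1 - 4 / x ^ 2) = √(x ^ 2 - 4) / x := by
    rw [show 1 - 4 / x ^ 2 = (x ^ 2 - 4) / x ^ 2 by field_simp, Real.sqrt_div' _ (by positivity),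
      Real.sqrt_sq hx0.le]
  rw [zeta1, hsqrt]
  field_simp

lemma zeta1_two : zeta1 2 = 1 := by
  norm_num [zeta1]

lemma zeta1_pos {x : ℝ} (hx : 2 < x) : 0 < zeta1 x := by
  have h : √(x ^ 2 - 4) < √(x ^ 2) := Real.sqrt_lt_sqrt (by nlinarith) (by linarith)
  rw [Real.sqrt_sq (by linarith)] at h
  rw [zeta1_eq_of_two_le hx.le]
  linarith

lemma zeta1_lt_one {x : ℝ} (hx : 2 < x) : zeta1 x < 1 := by
  have h : √((x - 2) ^ 2) < √(x ^ 2 - 4) := Real.sqrt_lt_sqrt (by positivity) (by nlinarith)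
  rw [Real.sqrt_sq (by linarith)] at h
  rw [zeta1_eq_of_two_le hx.le]
  linarith

lemma zeta1_mem_Icc {x : ℝ} (hx : 2 < x) : zeta1 x ∈ Icc 0 1 :=
  ⟨(zeta1_pos hx).le, (zeta1_lt_one hx).le⟩

lemma zeta1_mul_sub_zeta1 {x : ℝ} (hx : 2 ≤ x) : zeta1 x * (x - zeta1 x) = 1 := by
  have h : √(x ^ 2 - 4) ^ 2 = x ^ 2 - 4 := Real.sq_sqrt (by nlinarith)
  rw [zeta1_eq_of_two_le hx]
  linear_combination -h / 4

lemma inv_lt_zeta1 {x : ℝ} (hx : 2 < x) : x⁻¹ < zeta1 x := by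
  have hpos := zeta1_pos hx
  have h := zeta1_mul_sub_zeta1 hx.le
  rw [inv_lt_iff_one_lt_mul₀ (by linarith)]
  nlinarith

lemma lipschitzOnWith_zeta1 : LipschitzOnWith (1 / 2) zeta1 (Ici 3) := by
  suffices key : ∀ x ∈ Ici (3 : ℝ), ∀ y ∈ Ici (3 : ℝ), y ≤ x →
      |zeta1 x - zeta1 y| ≤ 1 / 2 * (x - y) by
    refine LipschitzOnWith.of_dist_le_mul fun x hx y hy => ?_
    rw [Real.dist_eq, Real.dist_eq, NNReal.coe_div, NNReal.coe_one, NNReal.coe_two]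
    rcases le_total y x with h | h
    · rw [abs_of_nonneg (sub_nonneg.2 h)]
      exact key x hx y hy h
    · rw [abs_sub_comm, abs_sub_comm x, abs_of_nonneg (sub_nonneg.2 h)]
      exact key y hy x hx h
  intro x (hx : 3 ≤ x) y (hy : 3 ≤ y) hxy
  set B := √(y ^ 2 - 4)
  have hB2 : B ^ 2 = y ^ 2 - 4 := Real.sq_sqrt (by nlinarith)
  have hB : y / 2 ≤ B := by nlinarith [Real.sqrt_nonneg (y ^ 2 - 4)]
  -- `√(x² - 4)` grows with slope `x / √(x² - 4) ≤ 2` on `[3, ∞)`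
  have hA : √(x ^ 2 - 4) ≤ B + 2 * (x - y) := by
    rw [Real.sqrt_le_left (by linarith)]
    nlinarith
  have hBA : B ≤ √(x ^ 2 - 4) := Real.sqrt_le_sqrt (by nlinarith)
  rw [zeta1_eq_of_two_le (by linarith), zeta1_eq_of_two_le (by linarith), abs_le]
  constructor <;> linarith

/-- The characteristic polynomial `X² - t X + 1` has the roots `zeta1 t` and
`t - zeta1 t = (zeta1 t)⁻¹ > 1`; boundedness kills the component along the second one. -/
lemma eq_zeta1_pow_smul_of_bddAbove {E : Type*} [NormedAddCommGroup E] [NormedSpace ℝ E]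
    {t : ℝ} (ht : 2 < t) {u : ℕ → E} (hu : BddAbove (range fun m => ‖u m‖))
    (hrec : ∀ m, u (m + 2) + u m = t • u (m + 1)) (m : ℕ) : u m = zeta1 t ^ m • u 0 := by
  set ζ := zeta1 t
  have hζ0 : 0 < ζ := zeta1_pos ht
  have hζ1 : ζ < 1 := zeta1_lt_one ht
  have hρ : ζ * (t - ζ) = 1 := zeta1_mul_sub_zeta1 ht.le
  set d : ℕ → E := fun m => u (m + 1) - ζ • u m
  have hd : ∀ m, d m = (t - ζ) ^ m • d 0 := by
    intro m
    induction m with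
    | zero => simp
    | succ n ih =>
      have hstep : d (n + 1) = (t - ζ) • d n := by
        simp only [d, smul_sub, smul_smul, mul_comm (t - ζ) ζ, hρ, one_smul, sub_smul]
        rw [← hrec n]
        abel
      rw [hstep, ih, smul_smul, pow_succ']
  have hd0 : d 0 = 0 := by
    obtain ⟨C, hC⟩ := hu
    have hbdd : BddAbove (range fun m => (t - ζ) ^ m * ‖d 0‖) := by
      refine ⟨C + C, forall_mem_range.2 fun m => ?_⟩
      have h1 : ‖u (m + 1)‖ ≤ C := hC ⟨m + 1, rfl⟩
      have h2 : ‖u m‖ ≤ C := hC ⟨m, rfl⟩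
      calc (t - ζ) ^ m * ‖d 0‖ = ‖d m‖ := by
            rw [hd m, norm_smul, Real.norm_of_nonneg (pow_nonneg (by linarith) _)]
        _ ≤ ‖u (m + 1)‖ + ζ * ‖u m‖ := (norm_sub_le _ _).trans_eq (by
            rw [norm_smul, Real.norm_of_nonneg hζ0.le])
        _ ≤ C + C := by nlinarith [norm_nonneg (u m)]
    by_contra hne
    exact Filter.not_bddAbove_of_tendsto_atTop
      ((tendsto_pow_atTop_atTop_of_one_lt (by nlinarith)).atTop_mul_const
        (norm_pos_iff.2 hne)) hbdd
  induction m with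
  | zero => simp
  | succ n ih =>
    have h := hd n
    rw [hd0, smul_zero, sub_eq_zero] at h
    rw [h, ih, smul_smul, pow_succ']

lemma inner_lead_eq {H : Type*} [NormedAddCommGroup H] [InnerProductSpace ℂ H]
    {T : H →ₗ[ℂ] H} (hT : T.IsSymmetric) {S x : H} {e : ℕ → H} (he : ∀ m, ‖e m‖ ≤ 1)
    {τ w lam : ℝ} (hgap : 2 < lam - w) (hx : T x = (lam : ℂ) • x)
    (h0 : T (e 0) = e 1 + (w : ℂ) • e 0 + (τ : ℂ) • S)
    (hsucc : ∀ m, T (e (m + 1)) = e (m + 2) + e m + (w : ℂ) • e (m + 1)) (m : ℕ) :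
    ⟪e m, x⟫_ℂ = ((τ * zeta1 (lam - w) ^ (m + 1) : ℝ) : ℂ) * ⟪S, x⟫_ℂ := by
  have hinner (y : H) : ⟪T y, x⟫_ℂ = lam * ⟪y, x⟫_ℂ := by
    rw [hT y x, hx, inner_smul_right]
  set u : ℕ → ℂ := fun m => ⟪e m, x⟫_ℂ
  have hbdd : BddAbove (range fun m => ‖u m‖) := by
    refine ⟨‖x‖, forall_mem_range.2 fun m => ?_⟩
    calc ‖u m‖ ≤ ‖e m‖ * ‖x‖ := norm_inner_le_norm _ _
      _ ≤ 1 * ‖x‖ := by gcongr; exact he m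
      _ = ‖x‖ := one_mul _
  have hrec (m : ℕ) : u (m + 2) + u m = (lam - w) • u (m + 1) := by
    have h := hinner (e (m + 1))
    rw [hsucc, inner_add_left, inner_add_left, inner_smul_left, Complex.conj_ofReal] at h
    rw [Complex.real_smul]
    push_cast
    linear_combination h
  have hgeom := eq_zeta1_pow_smul_of_bddAbove hgap hbdd hrec
  set ζ := zeta1 (lam - w)
  have hρ : ζ * (lam - w - ζ) = 1 := zeta1_mul_sub_zeta1 hgap.le
  have hu0 : u 0 = (τ * ζ : ℝ) * ⟪S, x⟫_ℂ := by
    have h := hinner (e 0)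
    rw [h0, inner_add_left, inner_add_left, inner_smul_left, inner_smul_left,
      Complex.conj_ofReal, Complex.conj_ofReal] at h
    have h1 := hgeom 1
    rw [pow_one, Complex.real_smul] at h1
    have hρℂ : (ζ : ℂ) * (lam - w - ζ) = 1 := by exact_mod_cast hρ
    simp only [u] at h1 ⊢
    push_cast
    linear_combination (-⟪e 0, x⟫_ℂ) * hρℂ - (ζ : ℂ) * h + (ζ : ℂ) * h1
  show u m = _
  rw [hgeom m, hu0, Complex.real_smul]
  push_cast
  ring

lemma Orthonormal.sq_le_of_norm_inner_eq_geometric {𝕜 E : Type*} [RCLike 𝕜]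
    [NormedAddCommGroup E] [InnerProductSpace 𝕜 E] {f : ℕ → E} (hf : Orthonormal 𝕜 f) {x : E}
    {r c : ℝ} (hr : |r| < 1) (h : ∀ m, ‖⟪f m, x⟫_𝕜‖ = r ^ m * c) :
    c ^ 2 ≤ (1 - r ^ 2) * ‖x‖ ^ 2 := by
  have hr2 : r ^ 2 < 1 := by rw [← sq_abs]; nlinarith [abs_nonneg r]
  have hsum : HasSum (fun m => ‖⟪f m, x⟫_𝕜‖ ^ 2) (c ^ 2 * (1 - r ^ 2)⁻¹) := by
    simp_rw [h, mul_pow, ← pow_mul, pow_mul', mul_comm _ (c ^ 2)]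
    exact (hasSum_geometric_of_lt_one (sq_nonneg r) hr2).mul_left _
  have hbessel := hsum.tsum_eq ▸ hf.tsum_inner_products_le x
  rwa [← div_eq_mul_inv, div_le_iff₀ (by linarith), mul_comm] at hbessel

section GapEstimates

variable {E₀ τ vc1 v lam : ℝ}

lemma sub_eq_and_abs_zeta1_sub_le (hvc1 : 1 ≤ vc1) (hlam : 3 ≤ lam)
    (hc : Gf E₀ τ (2 + vc1) vc1 = 0) (hv : Gf E₀ τ lam v = 0) :
    lam - (2 + vc1) = τ ^ 2 * (zeta1 lam - zeta1 (2 + vc1)) - τ ^ 2 * (1 - zeta1 (lam - v)) ∧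
      |zeta1 lam - zeta1 (2 + vc1)| ≤ |lam - (2 + vc1)| / 2 := by
  refine ⟨?_, ?_⟩
  · rw [Gf, add_sub_cancel_right, zeta1_two] at hc
    rw [Gf] at hv
    linear_combination hc - hv
  · have h := lipschitzOnWith_zeta1.dist_le_mul lam hlam (2 + vc1)
      (show (3 : ℝ) ≤ 2 + vc1 by linarith)
    rw [Real.dist_eq, Real.dist_eq, NNReal.coe_div, NNReal.coe_one, NNReal.coe_two] at h
    linarith

lemma abs_sub_le_of_Gf_eq_zero (hτ : τ ^ 2 ≤ 1 / 4) (hvc1 : 1 ≤ vc1) (hlam : 3 ≤ lam)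
    (hgap : 2 < lam - v) (hc : Gf E₀ τ (2 + vc1) vc1 = 0) (hv : Gf E₀ τ lam v = 0) :
    |lam - (2 + vc1)| ≤ 8 / 7 * (τ ^ 2 * (1 - zeta1 (lam - v))) := by
  obtain ⟨hD, hR⟩ := sub_eq_and_abs_zeta1_sub_le hvc1 hlam hc hv
  have hg : 0 ≤ 1 - zeta1 (lam - v) := by linarith [zeta1_lt_one hgap]
  have hτR : τ ^ 2 * |zeta1 lam - zeta1 (2 + vc1)| ≤ |lam - (2 + vc1)| / 8 := by
    nlinarith [abs_nonneg (lam - (2 + vc1)), sq_nonneg τ]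
  have htri := abs_sub (τ ^ 2 * (zeta1 lam - zeta1 (2 + vc1))) (τ ^ 2 * (1 - zeta1 (lam - v)))
  rw [← hD, abs_mul, abs_mul, abs_of_nonneg (sq_nonneg τ), abs_of_nonneg hg] at htri
  linarith

lemma sq_mul_one_sub_zeta1_le (hτ : τ ^ 2 ≤ 1 / 4) (hvc1 : 1 ≤ vc1) (hlam : 3 ≤ lam)
    (hgap : 2 < lam - v) (hc : Gf E₀ τ (2 + vc1) vc1 = 0) (hv : Gf E₀ τ lam v = 0) :
    τ ^ 2 * (1 - zeta1 (lam - v)) ≤ 7 / 6 * (vc1 - v) := by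
  obtain ⟨hD, hR⟩ := sub_eq_and_abs_zeta1_sub_le hvc1 hlam hc hv
  have hD' := abs_sub_le_of_Gf_eq_zero hτ hvc1 hlam hgap hc hv
  have hτR : τ ^ 2 * (zeta1 lam - zeta1 (2 + vc1)) ≤ |lam - (2 + vc1)| / 8 := by
    nlinarith [le_abs_self (zeta1 lam - zeta1 (2 + vc1)), abs_nonneg (lam - (2 + vc1)),
      sq_nonneg τ]
  linarith

end GapEstimates

section Eigenvector

variable {H : Type*} [NormedAddCommGroup H] [InnerProductSpace ℂ H]

lemma pow_four_mul_sq_norm_inner_le {e : ℕ → H} (he : Orthonormal ℂ e) {S x : H} (hx : ‖x‖ = 1)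
    {E₀ τ vc1 v lam : ℝ} (hτ : τ ^ 2 ≤ 1 / 4) (hvc1 : 2 ≤ vc1) (hv : vc1 - 1 < v)
    (hgap : v + 2 < lam) (hc : Gf E₀ τ (2 + vc1) vc1 = 0) (hGv : Gf E₀ τ lam v = 0)
    (hcoef : ∀ m, ⟪e m, x⟫_ℂ = ((τ * zeta1 (lam - v) ^ (m + 1) : ℝ) : ℂ) * ⟪S, x⟫_ℂ) :
    τ ^ 4 * ‖⟪S, x⟫_ℂ‖ ^ 2 ≤ 40 * (vc1 - v) := by
  have hgap' : 2 < lam - v := by linarith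
  set ζ := zeta1 (lam - v)
  set a := ‖⟪S, x⟫_ℂ‖
  have hζ0 : 0 < ζ := zeta1_pos hgap'
  have hζ1 : ζ < 1 := zeta1_lt_one hgap'
  have hg : τ ^ 2 * (1 - ζ) ≤ 7 / 6 * (vc1 - v) :=
    sq_mul_one_sub_zeta1_le hτ (by linarith) (by linarith) hgap' hc hGv
  have hζ : 1 / 4 < ζ := by
    have hD := abs_sub_le_of_Gf_eq_zero hτ (by linarith) (by linarith) hgap' hc hGv
    have hlam : lam - v < 4 := by
      nlinarith [le_abs_self (lam - (2 + vc1)), sq_nonneg τ]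
    calc 1 / 4 < (lam - v)⁻¹ := by rw [one_div]; gcongr
      _ < ζ := inv_lt_zeta1 hgap'
  have hbessel : (|τ| * ζ * a) ^ 2 ≤ (1 - ζ ^ 2) * ‖x‖ ^ 2 := by
    refine he.sq_le_of_norm_inner_eq_geometric (by rwa [abs_of_pos hζ0]) fun m => ?_
    rw [hcoef, norm_mul, Complex.norm_real, Real.norm_eq_abs, abs_mul, abs_pow,
      abs_of_pos hζ0]
    ring
  rw [hx, one_pow, mul_one, mul_pow, mul_pow, sq_abs] at hbessel
  calc τ ^ 4 * a ^ 2 ≤ 16 * τ ^ 2 * (τ ^ 2 * ζ ^ 2 * a ^ 2) := by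
        have h16 : 1 ≤ 16 * ζ ^ 2 := by nlinarith
        nlinarith [mul_le_mul_of_nonneg_left h16 (by positivity : 0 ≤ τ ^ 2 * (τ ^ 2 * a ^ 2))]
    _ ≤ 16 * τ ^ 2 * (1 - ζ ^ 2) := by gcongr
    _ ≤ 32 * (τ ^ 2 * (1 - ζ)) := by
        have h2 : 1 - ζ ^ 2 ≤ 2 * (1 - ζ) := by nlinarith
        nlinarith [mul_le_mul_of_nonneg_left h2 (sq_nonneg τ)]
    _ ≤ 40 * (vc1 - v) := by
        nlinarith [mul_nonneg (sq_nonneg τ) (by linarith : 0 ≤ 1 - ζ)]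

lemma norm_inner_le_of_lead_eq {e : Bool → ℕ → H} {S x : H} {τ ζf ζt : ℝ} (hτ : |τ| ≤ 1)
    (hζf : ζf ∈ Icc 0 1) (hζt : ζt ∈ Icc 0 1)
    (hf : ∀ m, ⟪e false m, x⟫_ℂ = ((τ * ζf ^ (m + 1) : ℝ) : ℂ) * ⟪S, x⟫_ℂ)
    (ht : ∀ m, ⟪e true m, x⟫_ℂ = ((τ * ζt ^ (m + 1) : ℝ) : ℂ) * ⟪S, x⟫_ℂ) {b : H}
    (hb : b = S ∨ ∃ γ m, b = e γ m) : ‖⟪b, x⟫_ℂ‖ ≤ ‖⟪S, x⟫_ℂ‖ := by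
  have hlead {ζ : ℝ} (hζ : ζ ∈ Icc 0 1) (m : ℕ) :
      ‖((τ * ζ ^ (m + 1) : ℝ) : ℂ) * ⟪S, x⟫_ℂ‖ ≤ ‖⟪S, x⟫_ℂ‖ := by
    rw [norm_mul, Complex.norm_real, Real.norm_eq_abs, abs_mul, abs_pow, abs_of_nonneg hζ.1]
    exact mul_le_of_le_one_left (norm_nonneg _)
      (mul_le_one₀ hτ (pow_nonneg hζ.1 _) (pow_le_one₀ hζ.1 hζ.2))
  rcases hb with rfl | ⟨_ | _, m, rfl⟩
  · exact le_rfl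
  · exact hf m ▸ hlead hζf m
  · exact ht m ▸ hlead hζt m

lemma norm_innerSL_smulRight_apply {x : H} (hx : ‖x‖ = 1) (b : H) :
    ‖(innerSL ℂ x).smulRight x b‖ = ‖⟪b, x⟫_ℂ‖ := by
  rw [ContinuousLinearMap.smulRight_apply, innerSL_apply_apply, norm_smul, hx, mul_one,
    norm_inner_symm]

end Eigenvector

theorem stmt16_general (E₀ : ℝ) :
    ∃ τ₀ > (0 : ℝ), ∀ τ : ℝ, τ ≠ 0 → |τ| ≤ τ₀ →
    ∀ vc1 : ℝ, 4 < vc1 → Gf E₀ τ (2 + vc1) vc1 = 0 →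
    ∀ (H : Type) [inst1 : NormedAddCommGroup H] [inst2 : InnerProductSpace ℂ H]
      [inst3 : CompleteSpace H],
    ∀ (S : H) (e : Bool → ℕ → H),
      Orthonormal ℂ (fun p : Option (Bool × ℕ) => p.elim S fun q => e q.1 q.2) →
      (Submodule.span ℂ
          (Set.range fun p : Option (Bool × ℕ) => p.elim S fun q => e q.1 q.2)).topologicalClosure
        = ⊤ →
    -- `A v = h(v)`, the coupled Hamiltonian with bias `v` on the `false` lead
    ∀ A : ℝ → (H →L[ℂ] H),
      (∀ v : ℝ, IsSelfAdjoint (A v) ∧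
        A v S = (E₀ : ℂ) • S + (τ : ℂ) • e false 0 + (τ : ℂ) • e true 0 ∧
        A v (e false 0) = e false 1 + (v : ℂ) • e false 0 + (τ : ℂ) • S ∧
        (∀ m : ℕ, A v (e false (m + 1))
            = e false (m + 2) + e false m + (v : ℂ) • e false (m + 1)) ∧
        A v (e true 0) = e true 1 + (τ : ℂ) • S ∧
        (∀ m : ℕ, A v (e true (m + 1)) = e true (m + 2) + e true m)) →
    ∀ (lam : ℝ → ℝ) (ψ : ℝ → H) (δ₀ : ℝ), 0 < δ₀ →
      -- `ψ v` is a normalized eigenvector for the discrete eigenvalue `λ(v) ∈ (v+2,∞)`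
      (∀ v ∈ Set.Ioo (vc1 - δ₀) vc1,
        ‖ψ v‖ = 1 ∧ v + 2 < lam v ∧ Gf E₀ τ (lam v) v = 0 ∧
          A v (ψ v) = ((lam v : ℝ) : ℂ) • ψ v) →
      ∃ δ ∈ Set.Ioc (0 : ℝ) δ₀, ∃ C > (0 : ℝ), ∀ v ∈ Set.Ioo (vc1 - δ) vc1,
        (∀ b : H, (b = S ∨ ∃ γ m, b = e γ m) →
          ‖((innerSL ℂ (ψ v)).smulRight (ψ v)) b‖ ^ 2 ≤ C * Real.sqrt (vc1 - v)) ∧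
        ‖(innerSL ℂ (ψ v)).smulRight (ψ v)‖ = 1 := by
  refine ⟨1 / 2, by norm_num,
    fun τ hτ0 hτ vc1 hvc1 hc H _ _ _ S e hON _ A hA lam ψ δ₀ hδ₀ hψ => ?_⟩
  have hτ2 : τ ^ 2 ≤ 1 / 4 := by nlinarith [sq_abs τ, abs_nonneg τ]
  refine ⟨min δ₀ 1, ⟨lt_min hδ₀ one_pos, min_le_left _ _⟩, 40 / τ ^ 4, by positivity,
    fun v hv => ?_⟩
  have hv1 : vc1 - 1 < v := (sub_le_sub_left (min_le_right _ _) _).trans_lt hv.1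
  obtain ⟨hψ1, hgap, hGv, heig⟩ :=
    hψ v ⟨(sub_le_sub_left (min_le_left _ _) _).trans_lt hv.1, hv.2⟩
  obtain ⟨hsa, -, hf0, hf, ht0, ht⟩ := hA v
  have he (γ : Bool) (m : ℕ) : ‖e γ m‖ ≤ 1 := (hON.1 (some (γ, m))).le
  have hfalse := inner_lead_eq hsa.isSymmetric (he false) (by linarith) heig hf0 hf
  have htrue := inner_lead_eq hsa.isSymmetric (he true) (w := 0) (by linarith) heig
    (by simpa using ht0) (by simpa using ht)
  have hdot := pow_four_mul_sq_norm_inner_le (hON.comp (fun m => some (false, m))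
    fun m n h => by simpa using h) hψ1 hτ2 (by linarith) hv1 hgap hc hGv hfalse
  refine ⟨fun b hb => ?_, ?_⟩
  · have hsqrt : vc1 - v ≤ √(vc1 - v) :=
      (Real.le_sqrt' (by linarith [hv.2])).2 (by nlinarith [hv.2])
    rw [norm_innerSL_smulRight_apply hψ1]
    calc ‖⟪b, ψ v⟫_ℂ‖ ^ 2 ≤ ‖⟪S, ψ v⟫_ℂ‖ ^ 2 := by
          gcongr
          exact norm_inner_le_of_lead_eq (hτ.trans (by norm_num))
            (zeta1_mem_Icc (by linarith)) (zeta1_mem_Icc (by linarith)) hfalse htrue hb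
      _ ≤ 40 / τ ^ 4 * (vc1 - v) := by
          rw [div_mul_eq_mul_div, le_div_iff₀ (by positivity)]
          linarith
      _ ≤ 40 / τ ^ 4 * √(vc1 - v) := by gcongr
  · rw [ContinuousLinearMap.norm_smulRight_apply, innerSL_apply_norm, hψ1, one_mul]

/-- The eigenprojection `P_d(v) = |ψ(v)⟩⟨ψ(v)|` of `h(v)` onto its eigenvalue
`λ(v) ∈ (v+2,∞)` converges strongly (but not in norm) to `0` as `v ↗ v_{c,1}`:
`‖P_d(v)e‖² ≤ C√(v_{c,1}-v)` for every fixed canonical basis vector `e`, while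
`‖P_d(v)‖ = 1`. -/
theorem stmt16 (E₀ : ℝ) (hE : 10 ≤ E₀) :
    ∃ τ₀ > (0 : ℝ), ∀ τ : ℝ, τ ≠ 0 → |τ| ≤ τ₀ →
    ∀ vc1 : ℝ, 4 < vc1 → Gf E₀ τ (2 + vc1) vc1 = 0 →
    ∀ (H : Type) [inst1 : NormedAddCommGroup H] [inst2 : InnerProductSpace ℂ H]
      [inst3 : CompleteSpace H],
    ∀ (S : H) (e : Bool → ℕ → H),
      Orthonormal ℂ (fun p : Option (Bool × ℕ) => p.elim S fun q => e q.1 q.2) →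
      (Submodule.span ℂ
          (Set.range fun p : Option (Bool × ℕ) => p.elim S fun q => e q.1 q.2)).topologicalClosure
        = ⊤ →
    -- `A v = h(v)`, the coupled Hamiltonian with bias `v` on the `false` lead
    ∀ A : ℝ → (H →L[ℂ] H),
      (∀ v : ℝ, IsSelfAdjoint (A v) ∧
        A v S = (E₀ : ℂ) • S + (τ : ℂ) • e false 0 + (τ : ℂ) • e true 0 ∧
        A v (e false 0) = e false 1 + (v : ℂ) • e false 0 + (τ : ℂ) • S ∧
        (∀ m : ℕ, A v (e false (m + 1))
            = e false (m + 2) + e false m + (v : ℂ) • e false (m + 1)) ∧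
        A v (e true 0) = e true 1 + (τ : ℂ) • S ∧
        (∀ m : ℕ, A v (e true (m + 1)) = e true (m + 2) + e true m)) →
    ∀ (lam : ℝ → ℝ) (ψ : ℝ → H) (δ₀ : ℝ), 0 < δ₀ →
      -- `ψ v` is a normalized eigenvector for the discrete eigenvalue `λ(v) ∈ (v+2,∞)`
      (∀ v ∈ Set.Ioo (vc1 - δ₀) vc1,
        ‖ψ v‖ = 1 ∧ v + 2 < lam v ∧ Gf E₀ τ (lam v) v = 0 ∧
          A v (ψ v) = ((lam v : ℝ) : ℂ) • ψ v) →
      ∃ δ ∈ Set.Ioc (0 : ℝ) δ₀, ∃ C > (0 : ℝ), ∀ v ∈ Set.Ioo (vc1 - δ) vc1,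
        (∀ b : H, (b = S ∨ ∃ γ m, b = e γ m) →
          ‖((innerSL ℂ (ψ v)).smulRight (ψ v)) b‖ ^ 2 ≤ C * Real.sqrt (vc1 - v)) ∧
        ‖(innerSL ℂ (ψ v)).smulRight (ψ v)‖ = 1 :=
  stmt16_general E₀
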